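/- Let D be a weakly sound class of small categories. If K is a locally D-presentable category and E is a small category, then the functor category [E, K] is locally D-presentable. -/

import Mathlib

open CategoryTheory CategoryTheory.Limits Opposite

universe w v u

namespace Paper

/-- The `M`-weighted colimit functor, sending `F : C ⥤ Type` to the conical colimit of
`F ∘ π` over the (opposite of the Mathlib) category of elements of `M`. -/
noncomputable def weightedColimF {C : Type u} [Category.{0} C] (M : Cᵒᵖ ⥤ Type)
    (h : HasColimitsOfShape (M.Elements)ᵒᵖ (Type 0)) : (C ⥤ Type) ⥤ Type :=
  letI := h
  (Functor.whiskeringLeft (M.Elements)ᵒᵖ C (Type 0)).obj (CategoryOfElements.π M).leftOp ⋙ colim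

/-- A weight `M : Cᵒᵖ ⥤ Type` is `D`-flat if `M`-weighted colimits commute in `Type`
with limits of shape `J` for every `J ∈ D`. -/
def DFlat (D : Set Cat.{0,0}) {C : Type u} [Category.{0} C] (M : Cᵒᵖ ⥤ Type) : Prop :=
  ∃ h : HasColimitsOfShape (M.Elements)ᵒᵖ (Type 0),
    ∀ J : Cat.{0,0}, J ∈ D → Nonempty (PreservesLimitsOfShape ↥J (weightedColimF M h))

/-- A category is `D`-cocomplete if it has colimits of shape `J` for every `J ∈ D`. -/
def DCocomplete (D : Set Cat.{0,0}) (C : Type u) [Category.{0} C] : Prop :=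
  ∀ J : Cat.{0,0}, J ∈ D → HasColimitsOfShape ↥J C

/-- A category is `D`-complete if it has limits of shape `J` for every `J ∈ D`. -/
def DComplete (D : Set Cat.{0,0}) (C : Type u) [Category.{0} C] : Prop :=
  ∀ J : Cat.{0,0}, J ∈ D → HasLimitsOfShape ↥J C

/-- A small category `C` is `D`-filtered if the colimit functor `(C ⥤ Type) ⥤ Type`
preserves limits of shape `J` for every `J ∈ D`. -/
def DFiltered (D : Set Cat.{0,0}) (C : Type) [SmallCategory C] : Prop :=
  ∀ J : Cat.{0,0}, J ∈ D →
    Nonempty (PreservesLimitsOfShape ↥J (colim : (C ⥤ Type) ⥤ Type))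

/-- `M : Cᵒᵖ ⥤ Type` sends colimits of `D`-shaped diagrams in `C` to limits in `Type`;
equivalently, it preserves limits of shape `Jᵒᵖ` for every `J ∈ D`. -/
def DContinuous (D : Set Cat.{0,0}) {C : Type u} [Category.{0} C] (M : Cᵒᵖ ⥤ Type) : Prop :=
  ∀ J : Cat.{0,0}, J ∈ D → Nonempty (PreservesLimitsOfShape (↥J)ᵒᵖ M)

/-- `D` is weakly sound if every presheaf on a small `D`-cocomplete category sending
`D`-shaped colimits to limits is `D`-flat. -/
def WeaklySound (D : Set Cat.{0,0}) : Prop :=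
  ∀ (C : Type) [SmallCategory C], DCocomplete D C →
    ∀ M : Cᵒᵖ ⥤ Type, DContinuous D M → DFlat D M

/-- An object `X` is `D`-presentable if `Hom(X, -)` preserves colimits of all
`D`-filtered shapes. -/
def DPresentable (D : Set Cat.{0,0}) {K : Type u} [Category.{0} K] (X : K) : Prop :=
  ∀ (C : Type) [SmallCategory C], DFiltered D C →
    Nonempty (PreservesColimitsOfShape C (coyoneda.obj (op X)))

/-- The restricted Yoneda functor `K ⥤ (Gᵒᵖ ⥤ Type)` associated to a set of objects `G`. -/
noncomputable def restrictedYoneda {K : Type u} [Category.{0} K] (G : Set K) :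
    K ⥤ ((ObjectProperty.FullSubcategory fun X : K => X ∈ G)ᵒᵖ ⥤ Type) :=
  yoneda ⋙ (Functor.whiskeringLeft _ _ _).obj (ObjectProperty.ι fun X : K => X ∈ G).op

/-- `G` is a strong generator: the restricted Yoneda functor is conservative. -/
def IsStrongGenerator {K : Type u} [Category.{0} K] (G : Set K) : Prop :=
  (restrictedYoneda G).ReflectsIsomorphisms

/-- `K` is locally `D`-presentable: cocomplete with a small strong generator consisting
of `D`-presentable objects. -/
def LocallyDPresentable (D : Set Cat.{0,0}) (K : Type u) [Category.{0} K] : Prop :=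
  HasColimits K ∧
    ∃ G : Set K, Small.{0} (↥G) ∧ (∀ X ∈ G, DPresentable D X) ∧ IsStrongGenerator G

/-- `K` is `D`-accessible: it has colimits of all `D`-filtered shapes and a small family of
`D`-presentable objects such that every object is a `D`-filtered colimit of objects there. -/
def DAccessible (D : Set Cat.{0,0}) (K : Type u) [Category.{0} K] : Prop :=
  (∀ (C : Type) [SmallCategory C], DFiltered D C → HasColimitsOfShape C K) ∧
  ∃ S : Set K, Small.{0} (↥S) ∧ (∀ X ∈ S, DPresentable D X) ∧
    ∀ X : K, ∃ C : Cat.{0,0}, DFiltered D ↥C ∧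
      ∃ H : ↥C ⥤ K, (∀ c : ↥C, H.obj c ∈ S) ∧
        ∃ cc : Cocone H, Nonempty (IsColimit cc) ∧ Nonempty (cc.pt ≅ X)

/-- The closure of a set of objects under colimits of `D`-shaped diagrams
(the smallest replete collection containing `S` and closed under such colimits). -/
inductive DShapeClos (D : Set Cat.{0,0}) {A : Type u} [Category.{0} A] (S : Set A) : A → Prop
  | of {X : A} : X ∈ S → DShapeClos D S X
  | iso {X Y : A} (e : X ≅ Y) : DShapeClos D S X → DShapeClos D S Y
  | colim (J : Cat.{0,0}) (hJ : J ∈ D) (H : ↥J ⥤ A)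
      (hH : ∀ j : ↥J, DShapeClos D S (H.obj j)) (c : Cocone H) (hc : IsColimit c) :
      DShapeClos D S c.pt

end Paper

/-!
Evaluation at `e : E` has a left adjoint `L_e`, and we take as generators of `E ⥤ K` the
objects `L_e g` for `e ∈ E` and `g` in a strong generator of `K`. By adjunction,
`Hom(L_e g, -) ≅ Hom(g, -) ∘ ev_e`; since evaluation preserves colimits, each `L_e g` is
`D`-presentable, and a natural transformation inducing bijections on maps out of every
`L_e g` induces bijections on maps out of every `g` at every component, so it is invertible.
-/

namespace Paper

section

variable {C : Type u} [Category.{0} C] {K : Type v} [Category.{0} K]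

theorem isIso_restrictedYoneda_map_iff (G : Set K) {X Y : K} (f : X ⟶ Y) :
    IsIso ((restrictedYoneda G).map f) ↔
      ∀ g ∈ G, Function.Bijective (fun u : g ⟶ X => u ≫ f) := by
  rw [NatTrans.isIso_iff_isIso_app]
  exact ⟨fun h g hg => (isIso_iff_bijective _).mp (h (op ⟨g, hg⟩)),
    fun h g => (isIso_iff_bijective _).mpr (h g.unop.1 g.unop.2)⟩

theorem isStrongGenerator_iff (G : Set K) :
    IsStrongGenerator G ↔ ∀ ⦃X Y : K⦄ (f : X ⟶ Y),
      (∀ g ∈ G, Function.Bijective (fun u : g ⟶ X => u ≫ f)) → IsIso f := by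
  constructor
  · intro hG X Y f hf
    have : IsIso ((restrictedYoneda G).map f) := (isIso_restrictedYoneda_map_iff G f).mpr hf
    exact hG.reflects f
  · exact fun h => ⟨fun f hf => h f ((isIso_restrictedYoneda_map_iff G f).mp hf)⟩

theorem Adjunction.bijective_comp_iff {L : C ⥤ K} {R : K ⥤ C} (adj : L ⊣ R) (A : C)
    {X Y : K} (f : X ⟶ Y) :
    Function.Bijective (fun u : L.obj A ⟶ X => u ≫ f) ↔
      Function.Bijective (fun v : A ⟶ R.obj X => v ≫ R.map f) := by
  have conj : (fun v : A ⟶ R.obj X => v ≫ R.map f) =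
      adj.homEquiv A Y ∘ (fun u => u ≫ f) ∘ (adj.homEquiv A X).symm := by
    funext v
    simp [Adjunction.homEquiv_naturality_right]
  rw [conj, EquivLike.comp_bijective, EquivLike.bijective_comp]

theorem DPresentable.obj_of_adjunction {D : Set Cat.{0,0}} {L : C ⥤ K} {R : K ⥤ C}
    (adj : L ⊣ R) [PreservesColimitsOfSize.{0, 0} R] {X : C} (hX : DPresentable D X) :
    DPresentable D (L.obj X) := fun J _ hJ => by
  obtain ⟨hpres⟩ := hX J hJ
  exact ⟨preservesColimitsOfShape_of_natIso (F := R ⋙ coyoneda.obj (op X))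
    (adj.compCoyonedaIso.app (op X)).symm⟩

end

theorem locallyDPresentable_functorCategory_general (D : Set Cat.{0,0})
    (K : Type u) [Category.{0} K] (hK : LocallyDPresentable D K)
    (E : Type) [SmallCategory E] :
    LocallyDPresentable D (E ⥤ K) := by
  obtain ⟨hcolim, G, hGsmall, hGpres, hGgen⟩ := hK
  let gen : E × G → (E ⥤ K) := fun p => (evaluationLeftAdjoint K p.1).obj p.2.1
  refine ⟨inferInstance, Set.range gen, inferInstance, ?_, ?_⟩
  · rintro _ ⟨⟨e, g, hg⟩, rfl⟩
    exact (hGpres g hg).obj_of_adjunction (evaluationAdjunctionRight K e)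
  · rw [isStrongGenerator_iff] at hGgen ⊢
    intro F F' η hη
    have (e : E) : IsIso (η.app e) := hGgen (η.app e) fun g hg =>
      (Adjunction.bijective_comp_iff (evaluationAdjunctionRight K e) g η).mp
        (hη _ ⟨(e, ⟨g, hg⟩), rfl⟩)
    exact NatIso.isIso_of_isIso_app η

/-- If `D` is weakly sound, `K` is locally `D`-presentable and `E` is a
small category, then the functor category `[E, K]` is locally `D`-presentable. -/
theorem locallyDPresentable_functorCategory (D : Set Cat.{0,0}) (hD : WeaklySound D)
    (K : Type u) [Category.{0} K] (hK : LocallyDPresentable D K)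
    (E : Type) [SmallCategory E] :
    LocallyDPresentable D (E ⥤ K) :=
  locallyDPresentable_functorCategory_general D K hK E

end Paper
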